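/- arXiv:1806.09376 — 4 statements merged into one kernel-verified Lean document; each statement's English description precedes it below -/
import Mathlib

section
/- Let $U, W, V$ be finite-dimensional vector spaces over a field $\K$ of characteristic zero and $\omega : U \times W \to V$ a bilinear map whose image spans $V$. Then the image of $\omega$ is not contained in any finite union of proper linear subspaces of $V$. -/
/-- Subspace avoidance over an infinite field: if a submodule `N` is not contained
in any member of a finite set of submodules, some element of `N` avoids all of them. -/
lemma submodule_avoidance {K M : Type*} [Field K] [Infinite K] [AddCommGroup M] [Module K M]
    (N : Submodule K M) (s : Finset (Submodule K M)) (h : ∀ p ∈ s, ¬ N ≤ p) :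
    ∃ x ∈ N, ∀ p ∈ s, x ∉ p := by
  classical
  induction s using Finset.induction with
  | empty => exact ⟨0, N.zero_mem, by simp⟩
  | @insert p t hp ih =>
    obtain ⟨x, hxN, hxt⟩ := ih (fun q hq => h q (Finset.mem_insert_of_mem hq))
    by_cases hxp : x ∉ p
    · exact ⟨x, hxN, fun q hq => by
        rcases Finset.mem_insert.mp hq with rfl | hq
        · exact hxp
        · exact hxt q hq⟩
    push_neg at hxp
    obtain ⟨y, hyN, hyp⟩ := Set.not_subset.mp
      (fun hsub => h p (Finset.mem_insert_self p t) hsub)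
    -- bad scalars: for each q ∈ t, at most one c with y + c • x ∈ q
    have hbad : ∀ q ∈ t, {c : K | y + c • x ∈ q}.Subsingleton := by
      intro q hq c₁ hc₁ c₂ hc₂
      by_contra hne
      have hx : x ∈ q := by
        have : (c₁ - c₂) • x ∈ q := by
          have := q.sub_mem hc₁ hc₂
          simpa [sub_smul, add_sub_add_left_eq_sub] using this
        have := q.smul_mem (c₁ - c₂)⁻¹ this
        rwa [smul_smul, inv_mul_cancel₀ (sub_ne_zero.mpr hne), one_smul] at this
      exact hxt q hq hx
    have hfin : ({c : K | ∃ q ∈ t, y + c • x ∈ q}).Finite := by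
      have : {c : K | ∃ q ∈ t, y + c • x ∈ q} = ⋃ q ∈ t, {c : K | y + c • x ∈ q} := by
        ext c; simp
      rw [this]
      exact Set.Finite.biUnion t.finite_toSet
        (fun q hq => (hbad q hq).finite)
    obtain ⟨c, hc⟩ := hfin.infinite_compl.nonempty
    refine ⟨y + c • x, N.add_mem hyN (N.smul_mem c hxN), fun q hq => ?_⟩
    rcases Finset.mem_insert.mp hq with rfl | hq
    · intro hmem
      exact hyp (by simpa using q.sub_mem hmem (q.smul_mem c hxp))
    · exact fun hmem => hc ⟨q, hq, hmem⟩

/-- the image of a bilinear map whose image spans `V` is not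
contained in any finite union of proper linear subspaces of `V`. -/
theorem bilinear_image_not_in_finite_union_of_proper_subspaces
    (K : Type*) [Field K] [CharZero K]
    (U W V : Type*) [AddCommGroup U] [Module K U] [FiniteDimensional K U]
    [AddCommGroup W] [Module K W] [FiniteDimensional K W]
    [AddCommGroup V] [Module K V] [FiniteDimensional K V]
    (ω : U →ₗ[K] W →ₗ[K] V)
    (hspan : Submodule.span K {v : V | ∃ u w, v = ω u w} = ⊤)
    (s : Finset (Submodule K V)) (hs : ∀ p ∈ s, p ≠ ⊤) :
    ∃ u w, ∀ p ∈ s, ω u w ∉ p := by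
  classical
  -- For p, the submodule of u's with ω u w ∈ p for all w
  set Q : Submodule K V → Submodule K U :=
    fun p => ⨅ w : W, Submodule.comap (ω.flip w) p with hQ
  have hQmem : ∀ p (u : U), u ∈ Q p ↔ ∀ w, ω u w ∈ p := by
    intro p u
    simp [hQ, Submodule.mem_iInf]
  have hQne : ∀ p ∈ s, ¬ (⊤ : Submodule K U) ≤ Q p := by
    intro p hp hle
    apply hs p hp
    rw [eq_top_iff, ← hspan, Submodule.span_le]
    rintro v ⟨u, w, rfl⟩
    exact (hQmem p u).mp (hle trivial) w
  have hQne' : ∀ q ∈ s.image Q, ¬ (⊤ : Submodule K U) ≤ q := by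
    intro q hq
    obtain ⟨p, hp, rfl⟩ := Finset.mem_image.mp hq
    exact hQne p hp
  obtain ⟨u, -, hu⟩ := submodule_avoidance (⊤ : Submodule K U) (s.image Q) hQne'
  have hrange : ∀ p ∈ s, ¬ LinearMap.range (ω u) ≤ p := by
    intro p hp hle
    apply hu (Q p) (Finset.mem_image_of_mem Q hp)
    exact (hQmem p u).mpr fun w => hle ⟨w, rfl⟩
  obtain ⟨x, hxr, hx⟩ := submodule_avoidance (LinearMap.range (ω u)) s hrange
  obtain ⟨w, rfl⟩ := hxr
  exact ⟨u, w, hx⟩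
end

section
/- Let $V$ be a vector space over a field $\K$ of characteristic zero and let $E = \sum_{p\in\Z} E_p$ be a $\Z$-graded right $V$-module (with $V$ acting as a commutative Lie algebra, lowering degree by one) satisfying: each $E_p$ is finite-dimensional, $E_p = 0$ for $p$ sufficiently negative, and no nonzero element of $\sum_{p\ge 0}E_p$ is annihilated by all of $V$. Then $E$ is finite-dimensional if and only if its graded dual $E^*$, regarded as a graded module over the polynomial algebra $\mathrm{Sym}(V)$, is $(V)$-coprimary, i.e. every $v \in V$ acts nilpotently on $E^*$. -/
/-- for a `ℤ`-graded right `V`-module `E` satisfying condition (C),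
`E` is finite dimensional iff its graded dual is `(V)`-coprimary, i.e. every
`v ∈ V` acts nilpotently on the graded dual.  Nilpotency of `v` on the graded
dual piece of degree `-p` is expressed, by duality, as the vanishing for some
`k` of the `k`-fold right multiplication map `E_{p+k} → E_p`. -/
theorem graded_module_finite_iff_dual_coprimary
    (K : Type*) [Field K] [CharZero K]
    (V : Type*) [AddCommGroup V] [Module K V] [FiniteDimensional K V]
    (M : Type*) [AddCommGroup M] [Module K M]
    (g : ℤ → Submodule K M) (hinternal : DirectSum.IsInternal g)
    (act : M →ₗ[K] V →ₗ[K] M)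
    (hcomm : ∀ (e : M) (v w : V), act (act e v) w = act (act e w) v)
    (hgrade : ∀ (p : ℤ), ∀ e ∈ g p, ∀ v : V, act e v ∈ g (p - 1))
    -- condition (C):
    (hfin : ∀ p : ℤ, FiniteDimensional K (g p))
    (hbdd : ∃ p₀ : ℤ, ∀ p < p₀, g p = ⊥)
    (heff : ∀ e ∈ ⨆ p ∈ {p : ℤ | 0 ≤ p}, g p, (∀ v : V, act e v = 0) → e = 0) :
    FiniteDimensional K M ↔
      ∀ (v : V) (p : ℤ), ∃ k : ℕ, ∀ e ∈ g (p + k),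
        (fun e => act e v)^[k] e = 0 := by
  classical
  constructor
  · -- forward direction: finite dimensional ⇒ only finitely many nonzero pieces
    intro hfd v p
    haveI : Fintype {q : ℤ // g q ≠ ⊥} :=
      hinternal.submodule_iSupIndep.fintypeNeBotOfFiniteDimensional
    set T : Finset ℤ := Finset.univ.image (fun s : {q : ℤ // g q ≠ ⊥} => s.val) with hT
    set B : ℕ := T.sup (fun q => q.toNat) with hB
    have hTB : ∀ q ∈ T, q ≤ B := by
      intro q hq
      have h1 : q.toNat ≤ B := Finset.le_sup (f := fun q : ℤ => q.toNat) hq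
      omega
    refine ⟨(B + 1 - p).toNat, ?_⟩
    have hbot : g (p + (B + 1 - p).toNat) = ⊥ := by
      by_contra hne
      have hmem : (p + ((B + 1 - p).toNat : ℤ)) ∈ T := by
        rw [hT]
        exact Finset.mem_image_of_mem (fun s : {q : ℤ // g q ≠ ⊥} => s.val)
          (Finset.mem_univ ⟨p + ((B + 1 - p).toNat : ℤ), hne⟩)
      have := hTB _ hmem
      omega
    intro e he
    rw [hbot, Submodule.mem_bot] at he
    subst he
    exact Function.iterate_fixed (by simp) _
  · -- reverse direction
    intro H
    obtain ⟨p₀, hp₀⟩ := hbdd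
    set b := Module.finBasis K V with hb
    choose k hk using fun i => H (b i) 0
    set N : ℕ := (∑ i, k i) + 1 with hN
    -- the action as a plain function
    set f : M → V → M := fun x v => act x v with hf
    haveI hrc : RightCommutative f := ⟨fun x y z => hcomm x y z⟩
    -- grading of iterated actions
    have hfold_mem : ∀ (l : List V) (p : ℤ) (e : M), e ∈ g p →
        l.foldl f e ∈ g (p - l.length) := by
      intro l
      induction l with
      | nil => intro p e he; simpa using he
      | cons w t ih =>
        intro p e he
        have h1 := ih (p - 1) (f e w) (hgrade p e he w)
        have h2 : p - 1 - (t.length : ℤ) = p - ((w :: t).length : ℤ) := by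
          simp [List.length_cons]; push_cast; ring
        rw [h2] at h1
        simpa using h1
    -- foldl over a constant list is an iterate
    have hfold_const : ∀ (c : ℕ) (v : V) (e : M),
        (List.replicate c v).foldl f e = (fun x => act x v)^[c] e := by
      intro c
      induction c with
      | zero => intro v e; simp
      | succ c ih =>
        intro v e
        rw [List.replicate_succ, List.foldl_cons, ih]
        rw [Function.iterate_succ_apply]
    -- membership of graded pieces of nonnegative degree in the big sup
    have hmem_sup : ∀ (p : ℤ), 0 ≤ p → ∀ e ∈ g p,
        e ∈ ⨆ q ∈ {q : ℤ | 0 ≤ q}, g q := by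
      intro p hp e he
      exact Submodule.mem_iSup_of_mem p (Submodule.mem_iSup_of_mem hp he)
    -- key injectivity lemma: an element of degree p ≥ 0 killed by all degree-p
    -- monomials in the basis vectors is zero
    have hkey : ∀ (p : ℕ) (e : M), e ∈ g (p : ℤ) →
        (∀ l : List V, (∀ w ∈ l, ∃ i, w = b i) → l.length = p →
          l.foldl f e = 0) → e = 0 := by
      intro p
      induction p with
      | zero =>
        intro e he h
        simpa using h [] (by simp) rfl
      | succ p ih =>
        intro e he h
        have hbz : ∀ j, act e (b j) = 0 := by
          intro j
          have hmem : act e (b j) ∈ g (p : ℤ) := by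
            have h1 := hgrade _ e he (b j)
            have h2 : ((p + 1 : ℕ) : ℤ) - 1 = (p : ℤ) := by push_cast; ring
            rwa [h2] at h1
          refine ih (act e (b j)) hmem ?_
          intro l hl hlen
          have := h (b j :: l) ?_ ?_
          · simpa [hf] using this
          · intro w hw
            rw [List.mem_cons] at hw
            rcases hw with hw | hw
            · exact ⟨j, hw⟩
            · exact hl w hw
          · simp [hlen]
        have hall : ∀ v : V, act e v = 0 := by
          have : act e = 0 := b.ext (by simpa using hbz)
          intro v; rw [this]; rfl
        exact heff e (hmem_sup _ (by positivity) e he) hall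
    -- length of a list of basis vectors is the sum of multiplicities
    have hlen_sum : ∀ l : List V, (∀ w ∈ l, ∃ i, w = b i) →
        l.length = ∑ i, (l.filter (fun x => decide (x = b i))).length := by
      intro l
      induction l with
      | nil => simp
      | cons w t ih =>
        intro hl
        obtain ⟨j, rfl⟩ := hl w (by simp)
        have ht := ih (fun w hw => hl w (by simp [hw]))
        have hstep : ∀ i, ((b j :: t).filter (fun x => decide (x = b i))).length
            = (t.filter (fun x => decide (x = b i))).length + if i = j then 1 else 0 := by
          intro i
          by_cases hij : i = j
          · subst hij; simp [List.filter_cons]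
          · have : ¬ (b j = b i) := fun hc => hij (b.injective hc).symm
            simp [List.filter_cons, this, hij]
        simp only [hstep, Finset.sum_add_distrib, Finset.sum_ite_eq' Finset.univ j]
        simp [List.length_cons, ht]
    -- killing lemma: any monomial of length ≥ N kills elements of matching degree
    have hkill : ∀ l : List V, (∀ w ∈ l, ∃ i, w = b i) → N ≤ l.length →
        ∀ e ∈ g (l.length : ℤ), l.foldl f e = 0 := by
      intro l hl hlN e he
      -- find a basis vector appearing at least k i times
      have hex : ∃ i, k i ≤ (l.filter (fun x => decide (x = b i))).length := by
        by_contra hc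
        push_neg at hc
        have h1 : ∑ i, ((l.filter (fun x => decide (x = b i))).length + 1) ≤ ∑ i, k i :=
          Finset.sum_le_sum fun i _ => hc i
        rw [Finset.sum_add_distrib] at h1
        have h2 := hlen_sum l hl
        omega
      obtain ⟨i, hi⟩ := hex
      set l₁ : List V := l.filter (fun x => decide (x = b i)) with hl₁
      set l₂ : List V := l.filter (fun x => !decide (x = b i)) with hl₂
      have hperm : List.Perm (l₂ ++ l₁) l := by
        have h1 := List.filter_append_perm (fun x => !decide (x = b i)) l
        have h2 : l.filter (fun x => !!decide (x = b i)) = l₁ := by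
          simp [hl₁]
        rw [h2] at h1
        exact h1
      have hrepl : l₁ = List.replicate l₁.length (b i) := by
        rw [List.eq_replicate_length]
        intro x hx
        have := List.of_mem_filter hx
        simpa using this
      have hsplit : l.foldl f e = l₁.foldl f (l₂.foldl f e) := by
        rw [← List.foldl_append]
        exact (hperm.foldl_eq e).symm
      rw [hsplit]
      have hlen_eq : (l₂.length : ℤ) + l₁.length = l.length := by
        have := hperm.length_eq
        simp at this
        push_cast
        omega
      have hmem2 : l₂.foldl f e ∈ g (l₁.length : ℤ) := by
        have h1 := hfold_mem l₂ (l.length : ℤ) e he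
        have h2 : (l.length : ℤ) - l₂.length = (l₁.length : ℤ) := by omega
        rwa [h2] at h1
      rw [hrepl, hfold_const]
      -- now split the iterate: l₁.length = (l₁.length - k i) + k i
      obtain ⟨d, hd⟩ : ∃ d, l₁.length = k i + d := ⟨l₁.length - k i, by omega⟩
      rw [hd, Function.iterate_add_apply]
      apply hk i
      have h1 := hfold_mem (List.replicate d (b i)) (l₁.length : ℤ) _ hmem2
      rw [hfold_const] at h1
      have h2 : (l₁.length : ℤ) - (List.replicate d (b i)).length = 0 + (k i : ℤ) := by
        simp [List.length_replicate]; omega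
      rwa [h2] at h1
    -- vanishing of high-degree pieces
    have hvanish : ∀ q : ℤ, (N : ℤ) ≤ q → g q = ⊥ := by
      intro q hq
      rw [Submodule.eq_bot_iff]
      intro e he
      have hq0 : ((q.toNat : ℕ) : ℤ) = q := Int.toNat_of_nonneg (by omega)
      refine hkey q.toNat e (by rwa [hq0]) ?_
      intro l hl hlen
      refine hkill l hl (by omega) e ?_
      rw [hlen, hq0]; exact he
    -- conclude finite dimensionality
    set s : Finset ℤ := Finset.Icc p₀ (N : ℤ) with hs
    have hsup : s.sup g = ⊤ := by
      rw [← hinternal.submodule_iSup_eq_top]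
      apply le_antisymm
      · exact Finset.sup_le fun q _ => le_iSup g q
      · apply iSup_le
        intro q
        by_cases hq : q ∈ s
        · exact Finset.le_sup hq
        · rw [hs, Finset.mem_Icc] at hq
          push_neg at hq
          rcases lt_or_ge q p₀ with h | h
          · rw [hp₀ q h]; exact bot_le
          · rw [hvanish q (by omega)]; exact bot_le
    have hfd : FiniteDimensional K (s.sup g : Submodule K M) :=
      Submodule.finiteDimensional_finset_sup s g
    rw [hsup] at hfd
    exact Submodule.topEquiv.finiteDimensional
end

section
/- Let $n \ge 3$ and $\mathfrak{co}(n,\K) = \{A \in \mathfrak{gl}_n(\K) \mid A^\top + A \in \K\cdot\mathrm{Id}_n\}$ be the conformal orthogonal Lie algebra over a field $\K$ of characteristic zero with algebraic closure $\Fb$. Then $\Fb\otimes\mathfrak{co}(n,\K) = \mathfrak{co}(n,\Fb)$ contains no endomorphism of $\Fb^n$ of rank one; equivalently, the maximal effective prolongation of type $\mathfrak{co}(n,\K)$ of $\K^n$ is finite-dimensional. -/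
/-- `ξ` belongs to the degree-`p` component of the maximal effective
prolongation of type `a₀` of the abelian Lie algebra `V`. -/
def IsProlongElt {K : Type*} [Field K] {V : Type*} [AddCommGroup V] [Module K V]
    (a0 : Set (Module.End K V)) {p : ℕ}
    (ξ : MultilinearMap K (fun _ : Fin (p + 1) => V) V) : Prop :=
  (∀ (v : Fin (p + 1) → V) (σ : Equiv.Perm (Fin (p + 1))), ξ (v ∘ σ) = ξ v) ∧
  ∀ v : Fin p → V, ∃ A ∈ a0, ∀ z : V, A z = ξ (Fin.snoc v z)

/-- The maximal effective prolongation of type `a₀` of `V` is finite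
dimensional: its homogeneous components vanish eventually. -/
def ProlongFinite {K : Type*} [Field K] {V : Type*} [AddCommGroup V] [Module K V]
    (a0 : Set (Module.End K V)) : Prop :=
  ∃ N : ℕ, ∀ p ≥ N, ∀ ξ : MultilinearMap K (fun _ : Fin (p + 1) => V) V,
    IsProlongElt a0 ξ → ξ = 0

open Matrix Module

/-- Part 1: no rank one elements in `co(n, F)` for `n ≥ 3`, char 0. -/
theorem CO.noRankOne {F : Type*} [Field F] [CharZero F] {n : ℕ} (hn : 3 ≤ n)
    (A : Matrix (Fin n) (Fin n) F)
    (h : ∃ c : F, Aᵀ + A = c • (1 : Matrix (Fin n) (Fin n) F)) : A.rank ≠ 1 := by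
  intro hr
  obtain ⟨c, hc⟩ := h
  have hfr : finrank F (LinearMap.range A.mulVecLin) = 1 := hr
  rw [finrank_eq_one_iff'] at hfr
  obtain ⟨⟨v, hvmem⟩, hv0, hspan⟩ := hfr
  have hvne : v ≠ 0 := by simpa using hv0
  have hcol : ∀ j, ∃ t : F, ∀ i, A i j = t * v i := by
    intro j
    have hmem : A *ᵥ Pi.single j 1 ∈ LinearMap.range A.mulVecLin :=
      ⟨Pi.single j 1, rfl⟩
    obtain ⟨t, ht⟩ := hspan ⟨_, hmem⟩
    have ht' : t • v = A *ᵥ Pi.single j 1 := Subtype.ext_iff.mp ht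
    refine ⟨t, fun i => ?_⟩
    have := congrFun ht' i
    simp [Matrix.mulVec_single] at this
    simpa using this.symm
  choose ξ hA using hcol
  have e : ∀ i j, ξ i * v j + ξ j * v i = (if i = j then c else 0) := by
    intro i j
    have h1 := congrFun (congrFun hc i) j
    simp only [Matrix.add_apply, Matrix.transpose_apply, Matrix.smul_apply,
      Matrix.one_apply, smul_eq_mul, hA] at h1
    rw [h1]
    split <;> simp
  obtain ⟨i0, hi0⟩ : ∃ i, v i ≠ 0 := by
    by_contra hcon
    push_neg at hcon
    exact hvne (funext fun i => hcon i)
  obtain ⟨j0, hj0⟩ : ∃ j, ξ j ≠ 0 := by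
    by_contra hcon
    push_neg at hcon
    have : A = 0 := by
      ext i j; simp [hA, hcon j]
    rw [this, Matrix.rank_zero] at hr
    exact one_ne_zero hr.symm
  have hdiag : ∀ k, 2 * (ξ k * v k) = c := by
    intro k; have := e k k; simp at this; linear_combination this
  have hcz : c = 0 := by
    by_contra hc0
    have hall : ∀ k, ξ k * v k ≠ 0 := by
      intro k h0
      exact hc0 (by rw [← hdiag k, h0, mul_zero])
    have h0n : (0 : ℕ) < n := by omega
    have h1n : (1 : ℕ) < n := by omega
    have h2n : (2 : ℕ) < n := by omega
    set p : Fin n := ⟨0, h0n⟩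
    set q : Fin n := ⟨1, h1n⟩
    set r : Fin n := ⟨2, h2n⟩
    have hpq : p ≠ q := by simp [p, q, Fin.ext_iff]
    have hqr : q ≠ r := by simp [q, r, Fin.ext_iff]
    have hpr : p ≠ r := by simp [p, r, Fin.ext_iff]
    have h1 := e p q; rw [if_neg hpq] at h1
    have h2 := e q r; rw [if_neg hqr] at h2
    have h3 := e p r; rw [if_neg hpr] at h3
    have e4 : ξ q * v q * (ξ p * v r) = ξ q * v q * (ξ r * v p) := by
      linear_combination (ξ q * v r) * h1 - (ξ q * v p) * h2
    have e5 : ξ p * v r = ξ r * v p := mul_left_cancel₀ (hall q) e4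
    have e6 : 2 * (ξ p * v r) = 0 := by linear_combination h3 + e5
    have e7 : ξ p * v r = 0 := (mul_eq_zero.mp e6).resolve_left two_ne_zero
    rcases mul_eq_zero.mp e7 with h | h
    · exact left_ne_zero_of_mul (hall p) h
    · exact right_ne_zero_of_mul (hall r) h
  have hdiag' : ∀ k, ξ k * v k = 0 := by
    intro k
    have := hdiag k; rw [hcz] at this
    have h2 : (2 : F) ≠ 0 := two_ne_zero
    exact (mul_eq_zero.mp this).resolve_left h2
  have hxi0 : ξ i0 = 0 := by
    rcases mul_eq_zero.mp (hdiag' i0) with h | h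
    · exact h
    · exact absurd h hi0
  have hvj0 : v j0 = 0 := by
    rcases mul_eq_zero.mp (hdiag' j0) with h | h
    · exact absurd h hj0
    · exact h
  have hij : i0 ≠ j0 := fun h => hj0 (h ▸ hxi0)
  have := e i0 j0
  rw [if_neg hij, hxi0, hvj0] at this
  simp at this
  rcases this with h | h
  · exact hj0 h
  · exact hi0 h

section Part2

variable {K : Type*} [Field K] [CharZero K] {n : ℕ}

lemma CO.snoc_pair (u v z : Fin n → K) :
    (Fin.snoc ![u, v] z : Fin 3 → (Fin n → K)) = ![u, v, z] := by
  funext k; fin_cases k <;> simp [Fin.snoc] <;> rfl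

lemma CO.update_one_eq (u x y w : Fin n → K) :
    Function.update ![u, x, w] 1 y = ![u, y, w] := by
  funext k; fin_cases k <;> simp

/-- Base case: the degree-2 component of the prolongation of `co(n, K)`
vanishes when `n ≥ 3`. -/
lemma CO.base_case (hn : 3 ≤ n)
    (ξ : MultilinearMap K (fun _ : Fin 3 => (Fin n → K)) (Fin n → K))
    (hsym : ∀ (v : Fin 3 → (Fin n → K)) (σ : Equiv.Perm (Fin 3)), ξ (v ∘ σ) = ξ v)
    (hrel : ∀ u v : Fin n → K, ∃ c : K, ∀ w z : Fin n → K,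
      ξ ![u, v, w] ⬝ᵥ z + ξ ![u, v, z] ⬝ᵥ w = c * (w ⬝ᵥ z)) :
    ξ = 0 := by
  classical
  choose c hc using hrel
  set E : Fin n → (Fin n → K) := fun k => Pi.single k 1 with hE
  have gE : ∀ a b : Fin n, E a ⬝ᵥ E b = if a = b then 1 else 0 := by
    intro a b
    simp [hE, dotProduct_single, Pi.single_apply, eq_comm]
  -- symmetry lemmas
  have sw1 : ∀ u v w : Fin n → K, ξ ![v, u, w] = ξ ![u, v, w] := by
    intro u v w
    have hm : (![u, v, w] : Fin 3 → (Fin n → K)) ∘ (Equiv.swap 0 1) = ![v, u, w] := by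
      funext k; fin_cases k <;> simp [Equiv.swap_apply_def]
    have h := hsym ![u, v, w] (Equiv.swap 0 1)
    rwa [hm] at h
  have sw2 : ∀ u v w : Fin n → K, ξ ![u, w, v] = ξ ![u, v, w] := by
    intro u v w
    have hm : (![u, v, w] : Fin 3 → (Fin n → K)) ∘ (Equiv.swap 1 2) = ![u, w, v] := by
      funext k; fin_cases k <;> simp [Equiv.swap_apply_def]
    have h := hsym ![u, v, w] (Equiv.swap 1 2)
    rwa [hm] at h
  have bsw1 : ∀ u v w z : Fin n → K, ξ ![v, u, w] ⬝ᵥ z = ξ ![u, v, w] ⬝ᵥ z := by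
    intro u v w z; rw [sw1]
  have bsw2 : ∀ u v w z : Fin n → K, ξ ![u, w, v] ⬝ᵥ z = ξ ![u, v, w] ⬝ᵥ z := by
    intro u v w z; rw [sw2]
  -- the star identity
  have hstar : ∀ u v w z : Fin n → K,
      2 * (ξ ![u, v, w] ⬝ᵥ z) =
        c u v * (w ⬝ᵥ z) + c u w * (v ⬝ᵥ z) - c u z * (v ⬝ᵥ w) := by
    intro u v w z
    have h1 := hc u v w z
    have h2 := hc u z v w
    have h3 := hc u w z v
    have e1 := bsw2 u z v w
    have e2 := bsw2 u w z v
    have e3 := bsw2 u v w z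
    have e4 := dotProduct_comm z v
    linear_combination h1 - h2 + h3 - e1 + e2 - e3 + c u w * e4
  have hone : E ⟨0, by omega⟩ ⬝ᵥ E ⟨0, by omega⟩ = 1 := by
    rw [gE]; simp
  have hcsym : ∀ u v : Fin n → K, c u v = c v u := by
    intro u v
    have h1 := hc u v (E ⟨0, by omega⟩) (E ⟨0, by omega⟩)
    have h2 := hc v u (E ⟨0, by omega⟩) (E ⟨0, by omega⟩)
    have de := bsw1 v u (E ⟨0, by omega⟩) (E ⟨0, by omega⟩)
    linear_combination -h1 + h2 + 2 * de - (c u v - c v u) * hone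
  -- the double star identity
  have hdstar : ∀ u v w z : Fin n → K,
      c u w * (v ⬝ᵥ z) - c u z * (v ⬝ᵥ w) = c v w * (u ⬝ᵥ z) - c v z * (u ⬝ᵥ w) := by
    intro u v w z
    have d1 := hstar u v w z
    have d2 := hstar v u w z
    have de := bsw1 v u w z
    have dc := hcsym u v
    linear_combination -d1 + d2 + 2 * de - (w ⬝ᵥ z) * dc
  -- diagonal values vanish
  have hdd : ∀ a b : Fin n, a ≠ b → c (E a) (E a) = -c (E b) (E b) := by
    intro a b hab
    have h := hdstar (E a) (E b) (E a) (E b)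
    rw [gE b b, gE b a, gE a b, gE a a] at h
    rw [if_pos rfl, if_pos rfl, if_neg (Ne.symm hab), if_neg hab] at h
    linear_combination h
  have h0n : (0 : ℕ) < n := by omega
  have h1n : (1 : ℕ) < n := by omega
  have h2n : (2 : ℕ) < n := by omega
  set p : Fin n := ⟨0, h0n⟩
  set q : Fin n := ⟨1, h1n⟩
  set r : Fin n := ⟨2, h2n⟩
  have hpq : p ≠ q := by simp [p, q, Fin.ext_iff]
  have hqr : q ≠ r := by simp [q, r, Fin.ext_iff]
  have hpr : p ≠ r := by simp [p, r, Fin.ext_iff]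
  have hdp : c (E p) (E p) = 0 := by
    have h1 := hdd p q hpq
    have h2 := hdd q r hqr
    have h3 := hdd p r hpr
    linear_combination (1/2 : K) * h1 - (1/2 : K) * h2 + (1/2 : K) * h3
  have hdiag0 : ∀ k : Fin n, c (E k) (E k) = 0 := by
    intro k
    by_cases hk : k = p
    · rw [hk]; exact hdp
    · have h1 := hdd k p hk; rw [hdp] at h1; simpa using h1
  -- off-diagonal basis values vanish
  have hbasis : ∀ a b : Fin n, c (E a) (E b) = 0 := by
    intro a b
    obtain ⟨m, hmn, hma, hmb⟩ : ∃ m : ℕ, m < n ∧ m ≠ a.val ∧ m ≠ b.val := by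
      refine ⟨if 0 ≠ a.val ∧ 0 ≠ b.val then 0 else if 1 ≠ a.val ∧ 1 ≠ b.val then 1 else 2, ?_⟩
      have ha := a.isLt; have hb := b.isLt
      split_ifs <;> omega
    set k : Fin n := ⟨m, hmn⟩
    have hka : k ≠ a := by simp [k, Fin.ext_iff]; exact hma
    have hkb : k ≠ b := by simp [k, Fin.ext_iff]; exact hmb
    have h := hdstar (E a) (E k) (E b) (E k)
    rw [gE k k, gE k b, gE a k, gE a b] at h
    rw [if_pos rfl, if_neg hkb, if_neg (Ne.symm hka)] at h
    rw [hdiag0 k] at h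
    by_cases hab : a = b
    · rw [hab]; exact hdiag0 b
    · rw [if_neg hab] at h; linear_combination h
  -- linearity expansion: c u x = ∑ j, x j * c u (E j)
  have hval : ∀ u x : Fin n → K, c u x = 2 * (ξ ![u, x, E p] ⬝ᵥ E p) := by
    intro u x
    have h := hc u x (E p) (E p)
    rw [gE p p, if_pos rfl] at h
    linear_combination -h
  have hexp : ∀ u x : Fin n → K, ξ ![u, x, E p] = ∑ j, x j • ξ ![u, E j, E p] := by
    intro u x
    have hx : ∑ j, Pi.single j (x j) = x := Finset.univ_sum_single x
    have hup : Function.update ![u, x, E p] 1 x = ![u, x, E p] := CO.update_one_eq u x x (E p)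
    calc ξ ![u, x, E p] = ξ (Function.update ![u, x, E p] 1 (∑ j, Pi.single j (x j))) := by
          rw [hx, hup]
      _ = ∑ j, ξ (Function.update ![u, x, E p] 1 (Pi.single j (x j))) :=
          ξ.map_update_sum Finset.univ 1 (fun j => Pi.single j (x j)) ![u, x, E p]
      _ = ∑ j, x j • ξ ![u, E j, E p] := by
          refine Finset.sum_congr rfl fun j _ => ?_
          have hs : Pi.single j (x j) = x j • E j := by
            funext i; simp [hE, Pi.single_apply, mul_ite, mul_one, mul_zero]
          rw [hs, ξ.map_update_smul, CO.update_one_eq]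
  have hlin : ∀ u x : Fin n → K, c u x = ∑ j, x j * c u (E j) := by
    intro u x
    have hsd : (∑ j, x j • ξ ![u, E j, E p]) ⬝ᵥ E p = ∑ j, (x j • ξ ![u, E j, E p]) ⬝ᵥ E p := by
      simp only [dotProduct, Finset.sum_apply, Finset.sum_mul]
      exact Finset.sum_comm
    rw [hval u x, hexp u x, hsd, Finset.mul_sum]
    refine Finset.sum_congr rfl fun j _ => ?_
    rw [smul_dotProduct, hval u (E j), smul_eq_mul]
    ring
  have ceq0 : ∀ u v : Fin n → K, c u v = 0 := by
    intro u v
    have hstep : ∀ j, c u (E j) = 0 := by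
      intro j
      rw [hcsym, hlin]
      simp [hbasis]
    rw [hlin]
    simp [hstep]
  -- conclude
  have hzero : ∀ u v w : Fin n → K, ξ ![u, v, w] = 0 := by
    intro u v w
    funext i
    have h := hstar u v w (E i)
    rw [ceq0, ceq0, ceq0] at h
    simp only [zero_mul, add_zero, sub_zero, zero_add] at h
    have h2 : ξ ![u, v, w] ⬝ᵥ E i = 0 := by
      have := mul_eq_zero.mp h
      exact this.resolve_left two_ne_zero
    rw [hE] at h2
    rw [dotProduct_single, mul_one] at h2
    simpa using h2
  apply MultilinearMap.ext
  intro m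
  have hm : m = ![m 0, m 1, m 2] := by funext k; fin_cases k <;> rfl
  rw [hm]
  simpa using hzero (m 0) (m 1) (m 2)

end Part2

/-- Induction step: if the degree-`p` component of the prolongation vanishes,
then so does the degree-`p+1` component. -/
lemma CO.step_case {K : Type*} [Field K] {V : Type*} [AddCommGroup V] [Module K V]
    (a0 : Set (Module.End K V)) (p : ℕ)
    (IH : ∀ ξ : MultilinearMap K (fun _ : Fin (p + 1) => V) V, IsProlongElt a0 ξ → ξ = 0)
    (ξ : MultilinearMap K (fun _ : Fin (p + 1 + 1) => V) V) (hξ : IsProlongElt a0 ξ) :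
    ξ = 0 := by
  have key : ∀ w : V,
      (ξ.curryLeft w : MultilinearMap K (fun _ : Fin (p + 1) => V) V) = 0 := by
    intro w
    apply IH
    constructor
    · intro v σ
      have hm : (Fin.cons w v : Fin (p + 2) → V) ∘ (Equiv.Perm.decomposeFin.symm (0, σ))
          = Fin.cons w (v ∘ σ) := by
        funext i
        refine Fin.cases ?_ (fun j => ?_) i
        · simp
        · simp [Equiv.Perm.decomposeFin_symm_apply_succ]
      have h := hξ.1 (Fin.cons w v) (Equiv.Perm.decomposeFin.symm (0, σ))
      rw [hm] at h
      simpa [MultilinearMap.curryLeft_apply] using h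
    · intro v
      obtain ⟨A, hA, hAz⟩ := hξ.2 (Fin.cons w v)
      refine ⟨A, hA, fun z => ?_⟩
      rw [hAz z, MultilinearMap.curryLeft_apply, Fin.cons_snoc_eq_snoc_cons]
  ext m
  have h1 : ξ m = ξ.curryLeft (m 0) (Fin.tail m) := by
    rw [MultilinearMap.curryLeft_apply, Fin.cons_self_tail]
  rw [h1, key (m 0)]
  rfl

/-- for `n ≥ 3`, `co(n)` over the algebraic closure contains no
rank-one endomorphism; equivalently the maximal effective prolongation of type
`co(n,K)` of `Kⁿ` is finite dimensional. -/
theorem conformal_orthogonal_no_rank_one_and_finite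
    (K : Type*) [Field K] [CharZero K] (n : ℕ) (hn : 3 ≤ n) :
    (∀ A : Matrix (Fin n) (Fin n) (AlgebraicClosure K),
        (∃ c : AlgebraicClosure K, A.transpose + A = c • (1 : Matrix (Fin n) (Fin n) (AlgebraicClosure K))) →
        A.rank ≠ 1) ∧
    ProlongFinite {A : Module.End K (Fin n → K) |
      ∃ c : K, (LinearMap.toMatrix' A).transpose + LinearMap.toMatrix' A
        = c • (1 : Matrix (Fin n) (Fin n) K)} := by
  constructor
  · intro A hA
    exact CO.noRankOne hn A hA
  · refine ⟨2, fun p hp => ?_⟩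
    induction p, hp using Nat.le_induction with
    | base =>
      intro ξ hξ
      apply CO.base_case hn ξ hξ.1
      intro u v
      obtain ⟨A, hA, hAz⟩ := hξ.2 ![u, v]
      obtain ⟨c, hM⟩ := hA
      refine ⟨c, fun w z => ?_⟩
      have h1 : ∀ z : Fin n → K, A z = ξ ![u, v, z] := by
        intro z
        rw [hAz z]
        congr 1
        exact CO.snoc_pair u v z
      have hmv : ∀ x : Fin n → K, A x = (LinearMap.toMatrix' A) *ᵥ x := by
        intro x
        conv_lhs => rw [← Matrix.toLin'_toMatrix' A]
        rw [Matrix.toLin'_apply]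
      rw [← h1 w, ← h1 z, hmv w, hmv z]
      set M := LinearMap.toMatrix' A with hMdef
      have h2 : (M *ᵥ z) ⬝ᵥ w = (Mᵀ *ᵥ w) ⬝ᵥ z := by
        rw [dotProduct_comm, Matrix.dotProduct_mulVec, ← Matrix.mulVec_transpose]
      rw [h2, ← add_dotProduct, ← Matrix.add_mulVec, add_comm M Mᵀ, hM,
        Matrix.smul_mulVec, Matrix.one_mulVec, smul_dotProduct, smul_eq_mul]
    | succ p hp IH =>
      intro ξ hξ
      exact CO.step_case _ p IH ξ hξ
end

section
/- Let $\mathfrak{m} = \mathfrak{g}_{-1}\oplus\mathfrak{g}_{-2}$ be a fundamental graded Lie algebra of the second kind over a field $\K$ of characteristic zero, i.e. $\mathfrak{g}_{-1}$ is finite-dimensional, $[\mathfrak{g}_{-1},\mathfrak{g}_{-1}] = \mathfrak{g}_{-2} \neq 0$, and $[\mathfrak{g}_{-1},\mathfrak{g}_{-2}]=[\mathfrak{g}_{-2},\mathfrak{g}_{-2}]=0$. If $\dim\mathfrak{g}_{-2} \le 2$, then the maximal effective $\mathfrak{gl}(\mathfrak{g}_{-1})$-prolongation of $\mathfrak{m}$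 is infinite-dimensional. -/
/-!
Write `lam = B₀ w₀ + B₁ w₁` with alternating forms `B₀, B₁` (possible as `dim W ≤ 2`). An infinite
prolongation comes from a field extension `E/K` with K-linear maps `ι : E → V` injective and
`ξ : V → E` nonzero, such that `ξ ∘ ι = 0` and `lam (ι (α ξ u)) v` is symmetric in `u, v`. Then
`W ⊕ V ⊕ E[X]`, with `a Xⁿ` in degree `n` acting on `V` by `v ↦ ξ v · a Xⁿ⁻¹` for `n ≥ 1` and by
`v ↦ ι (a ξ v)` for `n = 0`, is an effective prolongation. Such data is a point, defined over `E`,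
where `lam (z, ·)` has rank at most one.

If `B₀` has a kernel vector `z`, then `lam (z, ·) = B₁ (z, ·) w₁` and `E = K` works. Otherwise
`T = B₀⁻¹ B₁` is `B₀`-self-adjoint; an irreducible factor `q` of its minimal polynomial lets
`E = K[X]/(q)` act on some `z ≠ 0` with `q(T) z = 0`. The orbit map `ι γ = γ(T) z` is
`B₀`-isotropic, because an alternating form on `K[θ]` for which multiplication by `θ` is
self-adjoint vanishes, and `ξ` is `B₀ (ι ·, v)` read through the trace form of `E/K`.
-/

/-- An effective (ℤ-graded) prolongation of type `gl(V)` of the fundamental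
graded Lie algebra of the second kind `m = V ⊕ W` with bracket `lam`. -/
structure EffProlong (K V W : Type) [Field K]
    [AddCommGroup V] [Module K V] [AddCommGroup W] [Module K W]
    (lam : V →ₗ[K] V →ₗ[K] W) where
  L : Type
  [lieRing : LieRing L]
  [lieAlg : LieAlgebra K L]
  g : ℤ → Submodule K L
  internal : DirectSum.IsInternal g
  grading : ∀ i j : ℤ, ∀ x ∈ g i, ∀ y ∈ g j, ⁅x, y⁆ ∈ g (i + j)
  bounded : ∀ p : ℤ, p < -2 → g p = ⊥
  e1 : V →ₗ[K] L
  e2 : W →ₗ[K] L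
  e1_inj : Function.Injective e1
  e2_inj : Function.Injective e2
  e1_range : LinearMap.range e1 = g (-1)
  e2_range : LinearMap.range e2 = g (-2)
  bracket_eq : ∀ v w : V, ⁅e1 v, e1 w⁆ = e2 (lam v w)
  effective : ∀ p : ℤ, 0 ≤ p → ∀ x ∈ g p, (∀ v : V, ⁅x, e1 v⁆ = 0) → x = 0

attribute [instance] EffProlong.lieRing EffProlong.lieAlg


/-- The underlying Lie algebra of the prolongation is finite dimensional. -/
def EffProlong.FinDim {K V W : Type} [Field K]
    [AddCommGroup V] [Module K V] [AddCommGroup W] [Module K W]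
    {lam : V →ₗ[K] V →ₗ[K] W} (S : EffProlong K V W lam) : Prop :=
  FiniteDimensional K S.L

open Polynomial

theorem Polynomial.divX_smul {R S : Type*} [Semiring R] [SMulZeroClass S R] (c : S) (p : R[X]) :
    (c • p).divX = c • p.divX := by
  ext n; simp [coeff_divX]

theorem Polynomial.divX_sub {R : Type*} [Ring R] (p q : R[X]) : (p - q).divX = p.divX - q.divX := by
  ext n; simp [coeff_divX]

theorem LinearMap.IsAlt.eq_zero_of_mul_left_selfAdjoint {K A : Type} [Field K] [CharZero K]
    [CommRing A] [Algebra K A] {β : A →ₗ[K] A →ₗ[K] K} (hβ : β.IsAlt) {θ : A}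
    (hθ : Algebra.adjoin K {θ} = ⊤) (hθβ : ∀ x y, β (θ * x) y = β x (θ * y)) : β = 0 := by
  have hinv (γ : A) : ∀ x y, β (γ * x) y = β x (γ * y) := by
    induction (hθ ▸ Algebra.mem_top : γ ∈ Algebra.adjoin K {θ}) using Algebra.adjoin_induction with
    | mem x hx => rwa [Set.mem_singleton_iff.mp hx]
    | algebraMap r => intro x y; simp [← Algebra.smul_def]
    | add γ δ _ _ hγ hδ => intro x y; simp [add_mul, hγ, hδ]
    | mul γ δ _ _ hγ hδ => intro x y; rw [mul_assoc, hγ, hδ, mul_left_comm, mul_assoc]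
  have hone (ε : A) : β 1 ε = 0 := by
    have hswap : β ε 1 = β 1 ε := by simpa using hinv ε 1 1
    exact self_eq_neg.mp (by rw [hβ.neg, hswap])
  exact LinearMap.ext₂ fun x y => by simpa [hone] using hinv x 1 y

theorem Module.End.exists_irreducible_aeval_apply_eq_zero {K V : Type} [Field K] [AddCommGroup V]
    [Module K V] [FiniteDimensional K V] [Nontrivial V] (T : Module.End K V) :
    ∃ q : K[X], Irreducible q ∧ ∃ z : V, z ≠ 0 ∧ aeval T q z = 0 := by
  have hmin := minpoly.ne_zero (Algebra.IsIntegral.isIntegral (R := K) T)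
  obtain ⟨q, hq, r, hqr⟩ := WfDvdMonoid.exists_irreducible_factor (minpoly.not_isUnit K T) hmin
  have hr : aeval T r ≠ 0 := by
    intro hr
    have hr0 : r ≠ 0 := by rintro rfl; exact hmin (by rw [hqr, mul_zero])
    have : q * r ∣ 1 * r := by simpa [← hqr] using minpoly.dvd K T hr
    exact hq.not_isUnit (isUnit_of_dvd_one ((mul_dvd_mul_iff_right hr0).mp this))
  obtain ⟨v, hv⟩ : ∃ v, aeval T r v ≠ 0 := by
    by_contra! h
    exact hr (LinearMap.ext h)
  refine ⟨q, hq, aeval T r v, hv, ?_⟩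
  rw [← Module.End.mul_apply, ← map_mul, ← hqr, minpoly.aeval, LinearMap.zero_apply]

theorem Module.End.exists_adjoinRoot_intertwining {K V : Type} [Field K] [AddCommGroup V]
    [Module K V] [FiniteDimensional K V] [Nontrivial V] (T : Module.End K V) :
    ∃ q : K[X], Irreducible q ∧ ∃ ι : AdjoinRoot q →ₗ[K] V,
      Function.Injective ι ∧ ∀ γ, ι (AdjoinRoot.root q * γ) = T (ι γ) := by
  obtain ⟨q, hq, z, hz, hqz⟩ := T.exists_irreducible_aeval_apply_eq_zero
  have := Fact.mk hq
  let f : K[X] →ₗ[K[X]] Module.AEval' T :=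
    LinearMap.toSpanSingleton K[X] _ (Module.AEval'.of T z)
  have hf : Ideal.span {q} ≤ LinearMap.ker f := by
    rw [Ideal.span_le, Set.singleton_subset_iff]
    show q • Module.AEval'.of T z = 0
    rw [← Module.AEval.of_aeval_smul, Module.End.smul_def, hqz, map_zero]
  let ι : AdjoinRoot q →ₗ[K] V :=
    (Module.AEval'.of T).symm.toLinearMap ∘ₗ ((Submodule.liftQ _ f hf).restrictScalars K)
  have hι (s : K[X]) : ι (AdjoinRoot.mk q s) = aeval T s z := by
    show (Module.AEval'.of T).symm (s • Module.AEval'.of T z) = _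
    rw [← Module.AEval.of_aeval_smul]
    simp
  have hmul (s : K[X]) (γ : AdjoinRoot q) : ι (AdjoinRoot.mk q s * γ) = aeval T s (ι γ) := by
    obtain ⟨t, rfl⟩ := AdjoinRoot.mk_surjective γ
    rw [← map_mul, hι, hι, map_mul, Module.End.mul_apply]
  refine ⟨q, hq, ι, (injective_iff_map_eq_zero ι).mpr fun γ hγ => ?_, fun γ => ?_⟩
  · by_contra hγ0
    apply hz
    obtain ⟨s, hs⟩ := AdjoinRoot.mk_surjective γ⁻¹
    have h := hmul s γ
    rwa [hs, inv_mul_cancel₀ hγ0, hγ, map_zero, ← map_one (AdjoinRoot.mk q), hι, map_one,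
      Module.End.one_apply] at h
  · rw [← AdjoinRoot.mk_X, hmul, aeval_X]

theorem Module.exists_dual_pair_of_finrank_le_two {K W : Type} [Field K] [AddCommGroup W]
    [Module K W] [FiniteDimensional K W] (h : Module.finrank K W ≤ 2) :
    ∃ (c₀ c₁ : Module.Dual K W) (w₀ w₁ : W), ∀ w, w = c₀ w • w₀ + c₁ w • w₁ := by
  let e := LinearEquiv.ofFinrankEq W (Fin (Module.finrank K W) → K) (Module.finrank_fin_fun K).symm
  let p := e.symm.toLinearMap ∘ₗ LinearMap.funLeft K K (Fin.castLE h)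
  have hp : Function.Surjective p :=
    e.symm.surjective.comp <|
      LinearMap.funLeft_surjective_of_injective _ _ _ (Fin.castLE_injective h)
  obtain ⟨s, hs⟩ := p.exists_rightInverse_of_surjective (LinearMap.range_eq_top.mpr hp)
  refine ⟨LinearMap.proj 0 ∘ₗ s, LinearMap.proj 1 ∘ₗ s, p (Pi.single 0 1), p (Pi.single 1 1),
    fun w => ?_⟩
  have hsw : s w = s w 0 • Pi.single 0 1 + s w 1 • Pi.single 1 1 := by
    ext i; fin_cases i <;> simp
  conv_lhs => rw [← LinearMap.id_apply (R := K) w, ← hs, LinearMap.comp_apply, hsw]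
  simp only [map_add, map_smul, LinearMap.comp_apply, LinearMap.proj_apply]

theorem Algebra.exists_trace_mul_eq {K E V : Type} [Field K] [Field E] [Algebra K E]
    [FiniteDimensional K E] [Algebra.IsSeparable K E] [AddCommGroup V] [Module K V]
    (φ : V →ₗ[K] Module.Dual K E) :
    ∃ ξ : V →ₗ[K] E, ∀ v γ, Algebra.trace K E (ξ v * γ) = φ v γ := by
  let τ := (Algebra.traceForm K E).toDual (traceForm_nondegenerate K E)
  refine ⟨τ.symm.toLinearMap ∘ₗ φ, fun v γ => ?_⟩
  rw [← Algebra.traceForm_apply, ← LinearMap.BilinForm.toDual_def (traceForm_nondegenerate K E)]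
  simp [τ]

theorem LinearMap.BilinForm.exists_adjoinRoot_isotropic_embedding {K V : Type} [Field K]
    [CharZero K] [AddCommGroup V] [Module K V] [FiniteDimensional K V] [Nontrivial V]
    {B₀ B₁ : V →ₗ[K] V →ₗ[K] K} (hB₀ : B₀.IsAlt) (hB₁ : B₁.IsAlt) (hnd : B₀.Nondegenerate) :
    ∃ q : K[X], Irreducible q ∧ ∃ ι : AdjoinRoot q →ₗ[K] V, Function.Injective ι ∧
      B₀.compl₁₂ ι ι = 0 ∧ ∀ γ v, B₁ (ι γ) v = B₀ (ι (AdjoinRoot.root q * γ)) v := by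
  set T := LinearMap.BilinForm.symmCompOfNondegenerate B₁ B₀ hnd
  have hT (u : V) : B₀ (T u) = B₁ u :=
    LinearMap.BilinForm.comp_symmCompOfNondegenerate_apply B₁ hnd u
  obtain ⟨q, hq, ι, hι, hιT⟩ := Module.End.exists_adjoinRoot_intertwining T
  refine ⟨q, hq, ι, hι, ?_, fun γ v => by rw [hιT, hT]⟩
  refine LinearMap.IsAlt.eq_zero_of_mul_left_selfAdjoint (fun γ => hB₀ (ι γ))
    AdjoinRoot.adjoinRoot_eq_top fun x y => ?_
  simp only [LinearMap.compl₁₂_apply, hιT, hT]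
  rw [← hB₀.neg, hT, hB₁.neg]

namespace PolynomialModel

variable {K V W E : Type} [Field K] [AddCommGroup V] [Module K V] [AddCommGroup W] [Module K W]
  [CommRing E] [Algebra K E] (lam : V →ₗ[K] V →ₗ[K] W) (ι : E →ₗ[K] V) (ξ : V →ₗ[K] E)

noncomputable def bracket (x y : W × V × E[X]) : W × V × E[X] :=
  (lam x.2.1 y.2.1,
   ι (x.2.2.coeff 0 * ξ y.2.1 - y.2.2.coeff 0 * ξ x.2.1),
   ξ y.2.1 • x.2.2.divX - ξ x.2.1 • y.2.2.divX)

theorem bracket_add_left (x y z : W × V × E[X]) :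
    bracket lam ι ξ (x + y) z = bracket lam ι ξ x z + bracket lam ι ξ y z := by
  obtain ⟨_, v₁, f₁⟩ := x; obtain ⟨_, v₂, f₂⟩ := y; obtain ⟨_, v₃, f₃⟩ := z
  simp only [bracket, Prod.mk_add_mk, Prod.mk.injEq, map_add, LinearMap.add_apply, coeff_add,
    divX_add, true_and]
  refine ⟨?_, by module⟩
  rw [← map_add ι]; congr 1; ring

theorem bracket_add_right (x y z : W × V × E[X]) :
    bracket lam ι ξ x (y + z) = bracket lam ι ξ x y + bracket lam ι ξ x z := by
  obtain ⟨_, v₁, f₁⟩ := x; obtain ⟨_, v₂, f₂⟩ := y; obtain ⟨_, v₃, f₃⟩ := z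
  simp only [bracket, Prod.mk_add_mk, Prod.mk.injEq, map_add, coeff_add, divX_add, true_and]
  refine ⟨?_, by module⟩
  rw [← map_add ι]; congr 1; ring

theorem bracket_smul_right (c : K) (x y : W × V × E[X]) :
    bracket lam ι ξ x (c • y) = c • bracket lam ι ξ x y := by
  obtain ⟨_, v₁, f₁⟩ := x; obtain ⟨_, v₂, f₂⟩ := y
  simp only [bracket, Prod.smul_mk, Prod.mk.injEq, map_smul, coeff_smul, divX_smul, true_and]
  constructor
  · rw [← map_smul ι, smul_sub, mul_smul_comm, smul_mul_assoc]
  · rw [smul_sub, smul_assoc, smul_comm c (ξ v₁)]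

theorem bracket_self (hlam : lam.IsAlt) (x : W × V × E[X]) : bracket lam ι ξ x x = 0 := by
  simp [bracket, hlam x.2.1]

theorem bracket_leibniz (hlam : lam.IsAlt) (hξι : ∀ γ, ξ (ι γ) = 0)
    (hsym : ∀ α u v, lam (ι (α * ξ u)) v = lam (ι (α * ξ v)) u) (x y z : W × V × E[X]) :
    bracket lam ι ξ x (bracket lam ι ξ y z) =
      bracket lam ι ξ (bracket lam ι ξ x y) z + bracket lam ι ξ y (bracket lam ι ξ x z) := by
  obtain ⟨_, v₁, f₁⟩ := x; obtain ⟨_, v₂, f₂⟩ := y; obtain ⟨_, v₃, f₃⟩ := z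
  have hskew (α : E) (u v : V) : lam v (ι (α * ξ u)) = -lam (ι (α * ξ v)) u := by
    rw [← hsym, hlam.neg]
  simp only [bracket, Prod.mk_add_mk, Prod.mk.injEq, hξι, map_sub, LinearMap.sub_apply, hskew,
    coeff_sub, coeff_smul, coeff_divX, divX_sub, divX_smul, smul_eq_mul, mul_zero, zero_smul,
    sub_zero, zero_sub]
  refine ⟨?_, ?_, ?_⟩
  · rw [hsym (f₃.coeff 0) v₂ v₁]; abel
  · rw [← map_add ι]; congr 1; ring
  · module

variable (K) in
def supported (s : Set ℤ) : Submodule K (W × V × E[X]) where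
  carrier := {x | (-2 ∉ s → x.1 = 0) ∧ (-1 ∉ s → x.2.1 = 0) ∧
    ∀ n : ℕ, (n : ℤ) ∉ s → x.2.2.coeff n = 0}
  add_mem' {x y} hx hy := ⟨fun h => by simp [hx.1 h, hy.1 h], fun h => by simp [hx.2.1 h, hy.2.1 h],
    fun n h => by simp [hx.2.2 n h, hy.2.2 n h]⟩
  zero_mem' := by simp
  smul_mem' c x hx := ⟨fun h => by simp [hx.1 h], fun h => by simp [hx.2.1 h],
    fun n h => by simp [hx.2.2 n h]⟩

theorem mem_supported {s : Set ℤ} {x : W × V × E[X]} :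
    x ∈ supported K s ↔ (-2 ∉ s → x.1 = 0) ∧ (-1 ∉ s → x.2.1 = 0) ∧
      ∀ n : ℕ, (n : ℤ) ∉ s → x.2.2.coeff n = 0 :=
  Iff.rfl

theorem mem_supported_singleton {i : ℤ} {x : W × V × E[X]} :
    x ∈ supported K {i} ↔ (i ≠ -2 → x.1 = 0) ∧ (i ≠ -1 → x.2.1 = 0) ∧
      ∀ n : ℕ, i ≠ n → x.2.2.coeff n = 0 := by
  simp only [mem_supported, Set.mem_singleton_iff, ne_comm]

theorem supported_mono {s t : Set ℤ} (h : s ⊆ t) :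
    supported K s ≤ (supported K t : Submodule K (W × V × E[X])) :=
  fun _ ⟨h₁, h₂, h₃⟩ => ⟨h₁ ∘ mt (@h _), h₂ ∘ mt (@h _), fun n => h₃ n ∘ mt (@h _)⟩

theorem disjoint_supported {s t : Set ℤ} (h : Disjoint s t) :
    Disjoint (supported K s) (supported K t : Submodule K (W × V × E[X])) := by
  rw [Submodule.disjoint_def]
  rintro ⟨w, v, f⟩ ⟨hs₁, hs₂, hs₃⟩ ⟨ht₁, ht₂, ht₃⟩
  have hst (k : ℤ) : k ∉ s ∨ k ∉ t := by
    by_contra! hk; exact Set.disjoint_left.mp h hk.1 hk.2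
  refine Prod.ext ?_ (Prod.ext ?_ (Polynomial.ext fun n => ?_))
  · exact (hst (-2)).elim hs₁ ht₁
  · exact (hst (-1)).elim hs₂ ht₂
  · exact (hst n).elim (hs₃ n) (ht₃ n)

theorem iSupIndep_supported_singleton :
    iSupIndep fun i : ℤ => (supported K {i} : Submodule K (W × V × E[X])) := fun i =>
  (disjoint_supported (disjoint_compl_right (a := ({i} : Set ℤ)))).mono_right <|
    iSup₂_le fun _ hj => supported_mono (Set.singleton_subset_iff.mpr hj)

theorem iSup_supported_singleton :
    ⨆ i : ℤ, (supported K {i} : Submodule K (W × V × E[X])) = ⊤ := by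
  have hpoly (f : E[X]) : ((0, 0, f) : W × V × E[X]) ∈ ⨆ i : ℤ, supported K {i} := by
    induction f using Polynomial.induction_on' with
    | add p q hp hq => simpa using add_mem hp hq
    | monomial n a =>
      refine Submodule.mem_iSup_of_mem (n : ℤ) <|
        mem_supported.mpr ⟨by simp, by simp, fun m hm => ?_⟩
      simp [coeff_monomial, show n ≠ m by rintro rfl; simp at hm]
  refine eq_top_iff.mpr fun ⟨w, v, f⟩ _ => ?_
  have hsplit : ((w, v, f) : W × V × E[X]) = (w, 0, 0) + (0, v, 0) + (0, 0, f) := by simp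
  rw [hsplit]
  refine add_mem (add_mem (Submodule.mem_iSup_of_mem (-2) ?_) (Submodule.mem_iSup_of_mem (-1) ?_))
    (hpoly f) <;> simp [mem_supported]

theorem isInternal_supported_singleton :
    DirectSum.IsInternal fun i : ℤ => (supported K {i} : Submodule K (W × V × E[X])) :=
  DirectSum.isInternal_submodule_of_iSupIndep_of_iSup_eq_top iSupIndep_supported_singleton
    iSup_supported_singleton

theorem coeff_mul_eq_zero_of_mem_supported {i j : ℤ} {x y : W × V × E[X]}
    (hx : x ∈ supported K {i}) (hy : y ∈ supported K {j}) {k : ℕ} (hk : (k : ℤ) - 1 ≠ i + j) :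
    x.2.2.coeff k * ξ y.2.1 = 0 := by
  rw [mem_supported_singleton] at hx hy
  by_cases hik : i = k
  · rw [hy.2.1 (by omega), map_zero, mul_zero]
  · rw [hx.2.2 k hik, zero_mul]

theorem bracket_mem_supported {i j : ℤ} {x y : W × V × E[X]}
    (hx : x ∈ supported K {i}) (hy : y ∈ supported K {j}) :
    bracket lam ι ξ x y ∈ supported K {i + j} := by
  refine mem_supported_singleton.mpr ⟨fun h => ?_, fun h => ?_, fun n h => ?_⟩
  · have hx₁ := (mem_supported_singleton.mp hx).2.1
    have hy₁ := (mem_supported_singleton.mp hy).2.1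
    by_cases hi : i = -1
    · rw [bracket, hy₁ (by omega), map_zero]
    · rw [bracket, hx₁ hi, map_zero, LinearMap.zero_apply]
  · have hxy := coeff_mul_eq_zero_of_mem_supported ξ hx hy (k := 0) (by push_cast; omega)
    have hyx := coeff_mul_eq_zero_of_mem_supported ξ hy hx (k := 0) (by push_cast; omega)
    rw [bracket, hxy, hyx, sub_zero, map_zero]
  · have hxy := coeff_mul_eq_zero_of_mem_supported ξ hx hy (k := n + 1) (by push_cast; omega)
    have hyx := coeff_mul_eq_zero_of_mem_supported ξ hy hx (k := n + 1) (by push_cast; omega)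
    simp only [bracket, coeff_sub, coeff_smul, coeff_divX, smul_eq_mul]
    rw [mul_comm, hxy, mul_comm, hyx, sub_zero]

theorem supported_singleton_eq_bot {p : ℤ} (hp : p < -2) :
    (supported K {p} : Submodule K (W × V × E[X])) = ⊥ := by
  refine eq_bot_iff.mpr fun ⟨w, v, f⟩ hx => ?_
  obtain ⟨hw, hv, hf⟩ := mem_supported_singleton.mp hx
  exact Prod.ext (hw (by omega)) <|
    Prod.ext (hv (by omega)) (Polynomial.ext fun n => hf n (by omega))

theorem range_inl_eq_supported :
    LinearMap.range (LinearMap.inl K W (V × E[X])) = supported K {-2} := by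
  ext ⟨w, v, f⟩
  simp [mem_supported_singleton, Polynomial.ext_iff, Prod.ext_iff, eq_comm]

theorem range_inr_comp_inl_eq_supported :
    LinearMap.range (LinearMap.inr K W (V × E[X]) ∘ₗ LinearMap.inl K V E[X]) =
      supported K {-1} := by
  ext ⟨w, v, f⟩
  simp [mem_supported_singleton, Polynomial.ext_iff, eq_comm]

theorem eq_zero_of_bracket_eq_zero [IsDomain E] (hι : Function.Injective ι) {v₀ : V}
    (hv₀ : ξ v₀ ≠ 0) {p : ℤ} (hp : 0 ≤ p) {x : W × V × E[X]} (hx : x ∈ supported K {p})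
    (hbr : bracket lam ι ξ x (0, v₀, 0) = 0) : x = 0 := by
  obtain ⟨w, v, f⟩ := x
  obtain ⟨hw, hv, -⟩ := mem_supported_singleton.mp hx
  obtain rfl : w = 0 := hw (by omega)
  obtain rfl : v = 0 := hv (by omega)
  simp only [bracket, map_zero, LinearMap.zero_apply, coeff_zero, zero_mul, sub_zero, divX_zero,
    smul_zero, Prod.mk_eq_zero, true_and, map_eq_zero_iff ι hι, mul_eq_zero, smul_eq_zero, hv₀,
    or_false, false_or] at hbr
  rw [← divX_mul_X_add f, hbr.1, hbr.2]
  simp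

noncomputable abbrev lieRing (hlam : lam.IsAlt) (hξι : ∀ γ, ξ (ι γ) = 0)
    (hsym : ∀ α u v, lam (ι (α * ξ u)) v = lam (ι (α * ξ v)) u) : LieRing (W × V × E[X]) :=
  { (inferInstance : AddCommGroup (W × V × E[X])) with
    bracket := bracket lam ι ξ
    add_lie := bracket_add_left lam ι ξ
    lie_add := bracket_add_right lam ι ξ
    lie_self := bracket_self lam ι ξ hlam
    leibniz_lie := bracket_leibniz lam ι ξ hlam hξι hsym }

noncomputable abbrev lieAlgebra (hlam : lam.IsAlt) (hξι : ∀ γ, ξ (ι γ) = 0)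
    (hsym : ∀ α u v, lam (ι (α * ξ u)) v = lam (ι (α * ξ v)) u) :
    letI := lieRing lam ι ξ hlam hξι hsym
    LieAlgebra K (W × V × E[X]) :=
  letI := lieRing lam ι ξ hlam hξι hsym
  { (inferInstance : Module K (W × V × E[X])) with lie_smul := bracket_smul_right lam ι ξ }

theorem exists_effProlong_not_finDim [IsDomain E] (hlam : lam.IsAlt) (hξι : ∀ γ, ξ (ι γ) = 0)
    (hsym : ∀ α u v, lam (ι (α * ξ u)) v = lam (ι (α * ξ v)) u) (hι : Function.Injective ι)
    (hξ : ξ ≠ 0) : ∃ S : EffProlong K V W lam, ¬ S.FinDim := by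
  let := lieRing lam ι ξ hlam hξι hsym
  let := lieAlgebra lam ι ξ hlam hξι hsym
  obtain ⟨v₀, hv₀⟩ : ∃ v, ξ v ≠ 0 := by
    by_contra! h
    exact hξ (LinearMap.ext h)
  refine ⟨{ L := W × V × E[X]
            g := fun i => supported K {i}
            internal := isInternal_supported_singleton
            grading := fun i j x hx y hy => bracket_mem_supported lam ι ξ hx hy
            bounded := fun p hp => supported_singleton_eq_bot hp
            e1 := LinearMap.inr K W (V × E[X]) ∘ₗ LinearMap.inl K V E[X]
            e2 := LinearMap.inl K W (V × E[X])
            e1_inj := fun v v' h => congrArg (·.2.1) h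
            e2_inj := LinearMap.inl_injective
            e1_range := range_inr_comp_inl_eq_supported
            e2_range := range_inl_eq_supported
            bracket_eq := fun v w => by show bracket lam ι ξ _ _ = _; simp [bracket]
            effective := fun p hp x hx hbr =>
              eq_zero_of_bracket_eq_zero lam ι ξ hι hv₀ hp hx (hbr v₀) }, ?_⟩
  intro (hfin : FiniteDimensional K (W × V × E[X]))
  have : FiniteDimensional K E[X] :=
    .of_injective (LinearMap.inr K W (V × E[X]) ∘ₗ LinearMap.inr K V E[X]) fun _ _ h =>
      congrArg (·.2.2) h
  exact Polynomial.not_finite (Module.Finite.of_restrictScalars_finite K E E[X])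

end PolynomialModel

section Prolongation

variable {K V W : Type} [Field K] [AddCommGroup V] [Module K V] [AddCommGroup W] [Module K W]
  {lam : V →ₗ[K] V →ₗ[K] W}

theorem exists_effProlong_not_finDim_of_apply_eq_smul_of_ne_zero (hlam : lam.IsAlt) {z : V}
    (hz : z ≠ 0) {ξ : Module.Dual K V} (hξ : ξ ≠ 0) (hξz : ξ z = 0) (w : W)
    (hzw : ∀ v, lam z v = ξ v • w) : ∃ S : EffProlong K V W lam, ¬ S.FinDim :=
  PolynomialModel.exists_effProlong_not_finDim lam (LinearMap.toSpanSingleton K V z) ξ hlam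
    (fun γ => by simp [hξz]) (fun α u v => by simp [hzw, smul_smul, mul_right_comm])
    (smul_left_injective K hz) hξ

theorem exists_effProlong_not_finDim_of_apply_eq_smul (hlam : lam.IsAlt) (hne : lam ≠ 0) {z : V}
    (hz : z ≠ 0) (ξ : Module.Dual K V) (w : W) (hzw : ∀ v, lam z v = ξ v • w) :
    ∃ S : EffProlong K V W lam, ¬ S.FinDim := by
  by_cases hz0 : lam z = 0
  · obtain ⟨u, hu⟩ := DFunLike.ne_iff.mp hne
    have hus : u ∉ K ∙ z := fun hmem => by
      obtain ⟨c, rfl⟩ := Submodule.mem_span_singleton.mp hmem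
      exact hu (by rw [map_smul, hz0, smul_zero]; rfl)
    obtain ⟨f, hfu, hf⟩ := Submodule.exists_dual_map_eq_bot_of_notMem hus inferInstance
    refine exists_effProlong_not_finDim_of_apply_eq_smul_of_ne_zero hlam hz
      (ξ := f) (fun h => hfu (by simp [h])) ?_ 0 (fun v => by simp [hz0])
    exact LinearMap.le_ker_iff_map.mpr hf (Submodule.mem_span_singleton_self z)
  · have hξ : ξ ≠ 0 := by
      rintro rfl
      exact hz0 (LinearMap.ext fun v => by simp [hzw])
    have hw : w ≠ 0 := by
      rintro rfl
      exact hz0 (LinearMap.ext fun v => by simp [hzw])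
    refine exists_effProlong_not_finDim_of_apply_eq_smul_of_ne_zero hlam hz hξ ?_ w hzw
    exact (smul_eq_zero.mp ((hzw z).symm.trans (hlam z))).resolve_right hw

theorem exists_effProlong_not_finDim_of_separatingLeft [FiniteDimensional K V] [Nontrivial V]
    [CharZero K] (hlam : lam.IsAlt) {c₀ c₁ : Module.Dual K W} {w₀ w₁ : W}
    (hW : ∀ w, w = c₀ w • w₀ + c₁ w • w₁) (hnd : (lam.compr₂ c₀).SeparatingLeft) :
    ∃ S : EffProlong K V W lam, ¬ S.FinDim := by
  set B₀ := lam.compr₂ c₀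
  have hB₀ : B₀.IsAlt := fun v => by simp [B₀, hlam v]
  obtain ⟨q, hq, ι, hι, hιι, hιB₁⟩ :=
    LinearMap.BilinForm.exists_adjoinRoot_isotropic_embedding hB₀
      (B₁ := lam.compr₂ c₁) (fun v => by simp [hlam v])
      (hB₀.isRefl.nondegenerate_iff_separatingLeft.mpr hnd)
  have := Fact.mk hq
  have : FiniteDimensional K (AdjoinRoot q) := (AdjoinRoot.powerBasis hq.ne_zero).finite
  obtain ⟨ξ, hξ⟩ := Algebra.exists_trace_mul_eq (B₀ ∘ₗ ι).flip
  replace hξ (v : V) (γ : AdjoinRoot q) : Algebra.trace K _ (ξ v * γ) = B₀ (ι γ) v := hξ v γ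
  refine PolynomialModel.exists_effProlong_not_finDim lam ι ξ hlam (fun γ => ?_) (fun α u v => ?_)
    hι fun hξ0 => ?_
  · refine (traceForm_nondegenerate K _).1 _ fun δ => ?_
    rw [Algebra.traceForm_apply, hξ]
    exact LinearMap.congr_fun₂ hιι δ γ
  · have hc₀ (β : AdjoinRoot q) (v : V) : c₀ (lam (ι β) v) = Algebra.trace K _ (ξ v * β) :=
      (hξ v β).symm
    have hc₁ (β : AdjoinRoot q) (v : V) :
        c₁ (lam (ι β) v) = Algebra.trace K _ (ξ v * (AdjoinRoot.root q * β)) :=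
      (hιB₁ β v).trans (hξ v _).symm
    rw [hW (lam _ v), hW (lam _ u), hc₀, hc₀, hc₁, hc₁]
    congr 2 <;> congr 1 <;> ring
  · have h1 : ι 1 = 0 := hnd (ι 1) fun v => by rw [← hξ, hξ0]; simp
    exact one_ne_zero (hι (h1.trans (map_zero ι).symm))

end Prolongation

/-- if `m = g₋₁ ⊕ g₋₂` is a fundamental graded Lie algebra of the
second kind with `dim g₋₂ ≤ 2`, its maximal effective `gl(g₋₁)`-prolongation is
infinite dimensional; equivalently, `m` admits an infinite-dimensional effective
prolongation. -/
theorem second_kind_small_center_infinite_prolongation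
    (K V W : Type) [Field K] [CharZero K]
    [AddCommGroup V] [Module K V] [FiniteDimensional K V]
    [AddCommGroup W] [Module K W] [FiniteDimensional K W]
    (lam : V →ₗ[K] V →ₗ[K] W)
    (halt : ∀ v : V, lam v v = 0)
    (hsurj : ∀ w : W, w ∈ Submodule.span K {w' : W | ∃ v v' : V, w' = lam v v'})
    (hW : ∃ w : W, w ≠ 0)
    (hdim : Module.finrank K W ≤ 2) :
    ∃ S : EffProlong K V W lam, ¬ S.FinDim := by
  have hne : lam ≠ 0 := by
    rintro rfl
    obtain ⟨w, hw⟩ := hW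
    exact hw (by simpa using hsurj w)
  obtain ⟨c₀, c₁, w₀, w₁, hrep⟩ := Module.exists_dual_pair_of_finrank_le_two hdim
  by_cases hnd : (lam.compr₂ c₀).SeparatingLeft
  · obtain ⟨u, hu⟩ := DFunLike.ne_iff.mp hne
    have : Nontrivial V := nontrivial_of_ne u 0 (by rintro rfl; exact hu (map_zero lam))
    exact exists_effProlong_not_finDim_of_separatingLeft halt hrep hnd
  · simp only [LinearMap.SeparatingLeft, not_forall] at hnd
    obtain ⟨z, hz, hz0⟩ := hnd
    refine exists_effProlong_not_finDim_of_apply_eq_smul halt hne hz0 (lam.compr₂ c₁ z) w₁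
      fun v => ?_
    rw [hrep (lam z v), show c₀ (lam z v) = 0 from hz v, zero_smul, zero_add]
    rfl
end
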